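/- arXiv:1703.02583 — 7 statements merged into one kernel-verified Lean document; each statement's English description precedes it below -/
import Mathlib

section
/- The polynomial f = x1^2 + x2*x3 + x2*x4 + x3*x4 has saturated Newton polytope (every lattice point of the convex hull of its exponent vectors is an exponent vector of f), but f^2 does not have saturated Newton polytope: the point (1,1,1,1) lies in the Newton polytope of f^2 but x1*x2*x3*x4 has zero coefficient in f^2. -/
open MvPolynomial

/-- The Newton polytope of a multivariate polynomial: the convex hull (in `ℝ^n`)
of its exponent vectors. -/
noncomputable def Newton {n : ℕ} {R : Type*} [CommSemiring R]
    (f : MvPolynomial (Fin n) R) : Set (Fin n → ℝ) :=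
  convexHull ℝ ((fun d : Fin n →₀ ℕ => fun i => (d i : ℝ)) '' ↑f.support)

/-- `f` has saturated Newton polytope: every lattice point of `Newton f`
is an exponent vector of `f`. -/
def SNP {n : ℕ} {R : Type*} [CommSemiring R] (f : MvPolynomial (Fin n) R) : Prop :=
  ∀ α : Fin n →₀ ℕ, (fun i => (α i : ℝ)) ∈ Newton f → coeff α f ≠ 0

noncomputable def m0 : Fin 4 →₀ ℕ := Finsupp.single 0 2
noncomputable def m1 : Fin 4 →₀ ℕ := Finsupp.single 1 1 + Finsupp.single 2 1
noncomputable def m2 : Fin 4 →₀ ℕ := Finsupp.single 1 1 + Finsupp.single 3 1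
noncomputable def m3 : Fin 4 →₀ ℕ := Finsupp.single 2 1 + Finsupp.single 3 1

lemma fX_eq : (X 0 ^ 2 + X 1 * X 2 + X 1 * X 3 + X 2 * X 3 : MvPolynomial (Fin 4) ℂ) =
    monomial m0 1 + monomial m1 1 + monomial m2 1 + monomial m3 1 := by
  simp [m0, m1, m2, m3, X_pow_eq_monomial, X, monomial_mul, monomial_pow, Finsupp.smul_single]

set_option maxHeartbeats 1000000 in
theorem stmt0 (f : MvPolynomial (Fin 4) ℂ)
    (hf : f = X 0 ^ 2 + X 1 * X 2 + X 1 * X 3 + X 2 * X 3) :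
    SNP f ∧ ¬ SNP (f ^ 2) ∧
      ((fun _ : Fin 4 => (1 : ℝ)) ∈ Newton (f ^ 2)) ∧
      coeff (Finsupp.equivFunOnFinite.symm fun _ : Fin 4 => 1) (f ^ 2) = 0 := by
  rw [fX_eq] at hf
  -- support of f
  have hsupp : f.support ⊆ {m0, m1, m2, m3} := by
    intro α hα
    rw [mem_support_iff] at hα
    by_contra hmem
    simp only [Finset.mem_insert, Finset.mem_singleton, not_or] at hmem
    obtain ⟨h0, h1, h2, h3⟩ := hmem
    exact hα (by simp [hf, coeff_monomial, Ne.symm h0, Ne.symm h1, Ne.symm h2, Ne.symm h3])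
  -- the bounding polytope
  set S : Set (Fin 4 → ℝ) := {x | x 0 + x 1 + x 2 + x 3 = 2 ∧
      x 1 ≤ x 2 + x 3 ∧ x 2 ≤ x 1 + x 3 ∧ x 3 ≤ x 1 + x 2} with hS
  have hconv : Convex ℝ S := by
    rintro x hx y hy s t hs ht hst
    obtain ⟨ex, ix1, ix2, ix3⟩ := hx
    obtain ⟨ey, iy1, iy2, iy3⟩ := hy
    refine ⟨?_, ?_, ?_, ?_⟩ <;>
      simp only [Pi.add_apply, Pi.smul_apply, smul_eq_mul]
    · linear_combination s * ex + t * ey + 2 * hst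
    · nlinarith [mul_le_mul_of_nonneg_left ix1 hs, mul_le_mul_of_nonneg_left iy1 ht]
    · nlinarith [mul_le_mul_of_nonneg_left ix2 hs, mul_le_mul_of_nonneg_left iy2 ht]
    · nlinarith [mul_le_mul_of_nonneg_left ix3 hs, mul_le_mul_of_nonneg_left iy3 ht]
  have hNf : Newton f ⊆ S := by
    apply convexHull_min _ hconv
    rintro _ ⟨d, hd, rfl⟩
    have hd' : d ∈ ({m0, m1, m2, m3} : Finset (Fin 4 →₀ ℕ)) := hsupp hd
    simp only [Finset.mem_insert, Finset.mem_singleton] at hd'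
    rcases hd' with rfl | rfl | rfl | rfl <;>
      refine ⟨?_, ?_, ?_, ?_⟩ <;>
        simp (config := { decide := true }) [m0, m1, m2, m3, Finsupp.single_apply] <;>
          norm_num
  have hSNP : SNP f := by
    intro α hα
    obtain ⟨he, h1, h2, h3⟩ := hNf hα
    beta_reduce at he h1 h2 h3
    have he' : α 0 + α 1 + α 2 + α 3 = 2 := by exact_mod_cast he
    have h1' : α 1 ≤ α 2 + α 3 := by exact_mod_cast h1
    have h2' : α 2 ≤ α 1 + α 3 := by exact_mod_cast h2
    have h3' : α 3 ≤ α 1 + α 2 := by exact_mod_cast h3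
    have hcase : (α 0 = 2 ∧ α 1 = 0 ∧ α 2 = 0 ∧ α 3 = 0) ∨
        (α 0 = 0 ∧ α 1 = 1 ∧ α 2 = 1 ∧ α 3 = 0) ∨
        (α 0 = 0 ∧ α 1 = 1 ∧ α 2 = 0 ∧ α 3 = 1) ∨
        (α 0 = 0 ∧ α 1 = 0 ∧ α 2 = 1 ∧ α 3 = 1) := by omega
    have key : α = m0 ∨ α = m1 ∨ α = m2 ∨ α = m3 := by
      rcases hcase with h | h | h | h
      · exact Or.inl (by ext i; fin_cases i <;>
          simp [m0, Finsupp.single_apply, h.1, h.2.1, h.2.2.1, h.2.2.2])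
      · exact Or.inr (Or.inl (by ext i; fin_cases i <;>
          simp [m1, Finsupp.single_apply, h.1, h.2.1, h.2.2.1, h.2.2.2]))
      · exact Or.inr (Or.inr (Or.inl (by ext i; fin_cases i <;>
          simp [m2, Finsupp.single_apply, h.1, h.2.1, h.2.2.1, h.2.2.2])))
      · exact Or.inr (Or.inr (Or.inr (by ext i; fin_cases i <;>
          simp [m3, Finsupp.single_apply, h.1, h.2.1, h.2.2.1, h.2.2.2])))
    rcases key with rfl | rfl | rfl | rfl <;>
      simp [hf, coeff_monomial, m0, m1, m2, m3, Finsupp.ext_iff, Finsupp.single_apply,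
        Fin.forall_fin_succ]
  -- coefficient of (1,1,1,1) in f^2 is 0
  have hc0 : coeff (Finsupp.equivFunOnFinite.symm fun _ : Fin 4 => 1) (f ^ 2) = 0 := by
    rw [hf]
    simp (config := { decide := true }) [m0, m1, m2, m3, monomial_mul, coeff_monomial,
      Finsupp.ext_iff, Finsupp.single_apply, Fin.forall_fin_succ, pow_two, mul_add, add_mul]
  -- (1,1,1,1) ∈ Newton (f^2)
  have hco03 : coeff (m0 + m3) (f ^ 2) = 2 := by
    rw [hf]
    simp (config := { decide := true }) [m0, m1, m2, m3, monomial_mul, coeff_monomial,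
      Finsupp.ext_iff, Finsupp.single_apply, Fin.forall_fin_succ, pow_two, mul_add, add_mul]
    norm_num
  have hco12 : coeff (m1 + m2) (f ^ 2) = 2 := by
    rw [hf]
    simp (config := { decide := true }) [m0, m1, m2, m3, monomial_mul, coeff_monomial,
      Finsupp.ext_iff, Finsupp.single_apply, Fin.forall_fin_succ, pow_two, mul_add, add_mul]
    norm_num
  have hmem03 : (m0 + m3) ∈ (f ^ 2).support := by
    rw [mem_support_iff, hco03]; norm_num
  have hmem12 : (m1 + m2) ∈ (f ^ 2).support := by
    rw [mem_support_iff, hco12]; norm_num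
  have hmid : (fun _ : Fin 4 => (1 : ℝ)) ∈ Newton (f ^ 2) := by
    have hp : (fun i => (((m0 + m3) : Fin 4 →₀ ℕ) i : ℝ)) ∈
        (fun d : Fin 4 →₀ ℕ => fun i => (d i : ℝ)) '' ↑(f ^ 2).support :=
      ⟨m0 + m3, by simpa using hmem03, rfl⟩
    have hq : (fun i => (((m1 + m2) : Fin 4 →₀ ℕ) i : ℝ)) ∈
        (fun d : Fin 4 →₀ ℕ => fun i => (d i : ℝ)) '' ↑(f ^ 2).support :=
      ⟨m1 + m2, by simpa using hmem12, rfl⟩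
    apply segment_subset_convexHull hp hq
    refine ⟨1/2, 1/2, by norm_num, by norm_num, by norm_num, ?_⟩
    funext i
    fin_cases i <;>
      simp (config := { decide := true }) [m0, m1, m2, m3, Finsupp.single_apply] <;>
        norm_num
  refine ⟨hSNP, ?_, hmid, hc0⟩
  intro hsnp
  exact hsnp _ (by simpa using hmid) hc0
end

section
/- The power sum symmetric polynomial p_λ = p_{λ1}·p_{λ2}···p_{λℓ} in n > ℓ variables, where λ = (λ1 ≥ ... ≥ λℓ) is a partition with λ1 ≥ 2, does not have saturated Newton polytope: the point (λ1−1, λ2, ..., λℓ, 1, 0, ..., 0) lies in Newton(p_λ) but is not an exponent vector of p_λ. -/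
open MvPolynomial Finset

theorem mem_segment_of_eq_add_smul {𝕜 E : Type*} [Field 𝕜] [LinearOrder 𝕜]
    [IsStrictOrderedRing 𝕜] [AddCommGroup E] [Module 𝕜 E]
    {a b x u : E} {s c : 𝕜} (hs : 0 ≤ s) (hsc : s ≤ c)
    (hx : x = a + s • u) (hb : b = a + c • u) : x ∈ segment 𝕜 a b := by
  obtain rfl | hc := (hs.trans hsc).eq_or_lt
  · obtain rfl : s = 0 := le_antisymm hsc hs
    simp [hx, left_mem_segment]
  rw [segment_eq_image']
  refine ⟨s / c, ⟨by positivity, div_le_one_of_le₀ hsc hc.le⟩, ?_⟩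
  simp only [hx, hb, add_sub_cancel_left, smul_smul, div_mul_cancel₀ s hc.ne']

theorem natCast_eq_add_smul_of_add_single_eq {σ : Type*} [DecidableEq σ] {d d' : σ →₀ ℕ}
    {a b : σ} {c : ℕ} (h : d + Finsupp.single a c = d' + Finsupp.single b c) :
    (fun i => (d i : ℝ)) = (fun i => (d' i : ℝ)) + (c : ℝ) • (Pi.single b 1 - Pi.single a 1) := by
  funext i
  have hi : ((d i + Finsupp.single a c i : ℕ) : ℝ) = ((d' i + Finsupp.single b c i : ℕ) : ℝ) := by
    exact_mod_cast congr($h i)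
  simp only [Nat.cast_add, Finsupp.single_eq_pi_single, Pi.add_apply, Pi.smul_apply, Pi.sub_apply,
    Pi.single_apply, smul_eq_mul] at hi ⊢
  split_ifs at hi ⊢ <;> push_cast at hi <;> linarith

section PowerSum

variable {σ ι R : Type*} [Fintype ι] [CommSemiring R]

noncomputable def termExponent (lam : ι → ℕ) (f : ι → σ) : σ →₀ ℕ :=
  ∑ i, Finsupp.single (f i) (lam i)

theorem prod_X_comp_pow_eq_monomial (lam : ι → ℕ) (f : ι → σ) :
    ∏ i, (X (f i) : MvPolynomial σ R) ^ lam i = monomial (termExponent lam f) 1 := by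
  simp only [X_pow_eq_monomial, termExponent]
  rw [monomial_sum_index]
  simp

theorem coeff_prod_psum [Fintype σ] [DecidableEq σ] [DecidableEq ι] (lam : ι → ℕ) (α : σ →₀ ℕ) :
    coeff α (∏ i, psum σ R (lam i)) = #{f : ι → σ | termExponent lam f = α} := by
  simp only [psum, prod_univ_sum, prod_X_comp_pow_eq_monomial, coeff_sum, coeff_monomial]
  rw [Fintype.piFinset_univ, sum_boole]

theorem mem_support_prod_psum [Fintype σ] [CharZero R] (lam : ι → ℕ) (f : ι → σ) :
    termExponent lam f ∈ (∏ i, psum σ R (lam i)).support := by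
  classical
  rw [mem_support_iff, coeff_prod_psum, Nat.cast_ne_zero, ← pos_iff_ne_zero, card_pos]
  exact ⟨f, by simp⟩

theorem card_support_termExponent_le (lam : ι → ℕ) (f : ι → σ) :
    #(termExponent lam f).support ≤ Fintype.card ι := by
  classical
  calc #(termExponent lam f).support ≤ #(univ.image f) := by
        refine card_le_card (Finsupp.support_finsetSum.trans (biUnion_subset.2 fun i _ => ?_))
        exact Finsupp.support_single_subset.trans (by simp)
    _ ≤ Fintype.card ι := card_image_le

theorem card_support_le_of_coeff_prod_psum_ne_zero [Fintype σ] {lam : ι → ℕ} {α : σ →₀ ℕ}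
    (h : coeff α (∏ i, psum σ R (lam i)) ≠ 0) : #α.support ≤ Fintype.card ι := by
  classical
  rw [coeff_prod_psum] at h
  obtain ⟨f, rfl⟩ : ∃ f, termExponent lam f = α := by
    by_contra! hne
    simp [filter_false_of_mem fun f _ => hne f] at h
  exact card_support_termExponent_le lam f

theorem termExponent_update [DecidableEq ι] (lam : ι → ℕ) (f : ι → σ) (i₀ : ι) (b : σ) :
    termExponent lam (Function.update f i₀ b) + Finsupp.single (f i₀) (lam i₀)
      = termExponent lam f + Finsupp.single b (lam i₀) := by
  simp only [termExponent, Fintype.sum_eq_add_sum_compl i₀, Function.update_self]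
  rw [sum_congr rfl fun i hi => by rw [Function.update_of_ne (by simpa using hi)]]
  abel

end PowerSum

theorem termExponent_castLE_apply {ℓ n : ℕ} (h : ℓ ≤ n) (lam : Fin ℓ → ℕ) (j : Fin n) :
    termExponent lam (Fin.castLE h) j = if hj : (j : ℕ) < ℓ then lam ⟨j, hj⟩ else 0 := by
  simp only [termExponent, Finsupp.finsetSum_apply, Finsupp.single_apply, Fin.ext_iff,
    Fin.val_castLE]
  split_ifs with hj
  · rw [sum_eq_single_of_mem ⟨j, hj⟩ (mem_univ _) fun x _ hx => if_neg fun h => hx (Fin.ext h),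
      if_pos rfl]
  · exact sum_eq_zero fun x _ => if_neg (by have := x.isLt; omega)

section Witness

variable {ℓ : ℕ} (n : ℕ) (hl : 0 < ℓ) (lam : Fin ℓ → ℕ)

def witnessExponent : Fin n → ℕ := fun j => if h : (j : ℕ) < ℓ then
    (if (j : ℕ) = 0 then lam ⟨0, hl⟩ - 1 else lam ⟨(j : ℕ), h⟩)
  else if (j : ℕ) = ℓ then 1 else 0

variable {n}

theorem witnessExponent_add_single (hn : ℓ < n) (h2 : 2 ≤ lam ⟨0, hl⟩) :
    Finsupp.equivFunOnFinite.symm (witnessExponent n hl lam)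
        + Finsupp.single (Fin.castLE hn.le ⟨0, hl⟩) 1
      = termExponent lam (Fin.castLE hn.le) + Finsupp.single ⟨ℓ, hn⟩ 1 := by
  ext ⟨_ | j, hj⟩
  all_goals
    simp only [Finsupp.add_apply, termExponent_castLE_apply, Finsupp.single_apply,
      witnessExponent, Fin.ext_iff, Fin.val_castLE, Finsupp.equivFunOnFinite_symm_apply_apply,
      Nat.add_one_ne_zero, Nat.zero_ne_add_one, ↓reduceIte]
    split_ifs <;> omega

theorem lt_card_support_witnessExponent (hn : ℓ < n) (hpos : ∀ i, 0 < lam i)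
    (h2 : 2 ≤ lam ⟨0, hl⟩) :
    ℓ < #(Finsupp.equivFunOnFinite.symm (witnessExponent n hl lam)).support := by
  calc ℓ < #(univ.image (Fin.castLE (hn : ℓ + 1 ≤ n))) := by
        rw [card_image_of_injective _ (Fin.castLE_injective _), card_fin]
        exact ℓ.lt_succ_self
    _ ≤ _ := card_le_card fun j hj => by
        obtain ⟨k, -, rfl⟩ := mem_image.1 hj
        have := k.isLt
        simp only [Finsupp.mem_support_iff, Finsupp.equivFunOnFinite_symm_apply_apply,
          witnessExponent, Fin.val_castLE]
        split_ifs <;> grind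

end Witness

theorem stmt7_general {ℓ n : ℕ} (hl : 0 < ℓ) (hn : ℓ < n)
    (lam : Fin ℓ → ℕ) (hpos : ∀ i, 0 < lam i)
    (h2 : 2 ≤ lam ⟨0, hl⟩)
    (p : MvPolynomial (Fin n) ℂ)
    (hp : p = ∏ i : Fin ℓ, ∑ j : Fin n, X j ^ lam i)
    (β : Fin n → ℕ)
    (hβ : β = fun j : Fin n => if h : (j : ℕ) < ℓ then
        (if (j : ℕ) = 0 then lam ⟨0, hl⟩ - 1 else lam ⟨(j : ℕ), h⟩)
      else if (j : ℕ) = ℓ then 1 else 0) :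
    (fun i => (β i : ℝ)) ∈ Newton p ∧
      coeff (Finsupp.equivFunOnFinite.symm β) p = 0 ∧ ¬ SNP p := by
  obtain rfl : p = ∏ i, psum (Fin n) ℂ (lam i) := hp
  obtain rfl : β = witnessExponent n hl lam := hβ
  have hmem : (fun i => (witnessExponent n hl lam i : ℝ)) ∈ Newton (∏ i, psum (Fin n) ℂ (lam i)) :=
    segment_subset_convexHull
      (Set.mem_image_of_mem _ (mem_support_prod_psum lam (Fin.castLE hn.le)))
      (Set.mem_image_of_mem _
        (mem_support_prod_psum lam (Function.update (Fin.castLE hn.le) ⟨0, hl⟩ ⟨ℓ, hn⟩)))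
      (mem_segment_of_eq_add_smul (s := (1 : ℕ)) (c := lam ⟨0, hl⟩) (by positivity)
        (by exact_mod_cast hpos _)
        (natCast_eq_add_smul_of_add_single_eq (witnessExponent_add_single hl lam hn h2))
        (natCast_eq_add_smul_of_add_single_eq (termExponent_update lam _ _ _)))
  have hcoeff : coeff (Finsupp.equivFunOnFinite.symm (witnessExponent n hl lam))
      (∏ i, psum (Fin n) ℂ (lam i)) = 0 := by
    by_contra h
    have hle := card_support_le_of_coeff_prod_psum_ne_zero h
    rw [Fintype.card_fin] at hle
    exact hle.not_gt (lt_card_support_witnessExponent hl lam hn hpos h2)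
  exact ⟨hmem, hcoeff, fun h => h _ hmem hcoeff⟩

/-- For a partition `λ = (λ1 ≥ ... ≥ λℓ)` with `λ1 ≥ 2` and all parts positive, the
power sum `p_λ` in `n > ℓ` variables is not SNP: the lattice point
`(λ1 − 1, λ2, ..., λℓ, 1, 0, ..., 0)` lies in `Newton(p_λ)` but has zero coefficient. -/
theorem stmt7 {ℓ n : ℕ} (hl : 0 < ℓ) (hn : ℓ < n)
    (lam : Fin ℓ → ℕ) (hdec : Antitone lam) (hpos : ∀ i, 0 < lam i)
    (h2 : 2 ≤ lam ⟨0, hl⟩)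
    (p : MvPolynomial (Fin n) ℂ)
    (hp : p = ∏ i : Fin ℓ, ∑ j : Fin n, X j ^ lam i)
    (β : Fin n → ℕ)
    (hβ : β = fun j : Fin n => if h : (j : ℕ) < ℓ then
        (if (j : ℕ) = 0 then lam ⟨0, hl⟩ - 1 else lam ⟨(j : ℕ), h⟩)
      else if (j : ℕ) = ℓ then 1 else 0) :
    (fun i => (β i : ℝ)) ∈ Newton p ∧
      coeff (Finsupp.equivFunOnFinite.symm β) p = 0 ∧ ¬ SNP p :=
  stmt7_general hl hn lam hpos h2 p hp β hβ
end

section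
/- For any k ≥ 1 and n ≥ 1: if the k-th power of the Vandermonde determinant a_{δn}^k = ∏_{1≤i<j≤n}(xi−xj)^k is not SNP, then a_{δ_{n+1}}^k is not SNP. -/
open MvPolynomial Finset

/-- The Vandermonde determinant `∏_{i<j} (xi − xj)` in `n` variables. -/
noncomputable def vand (n : ℕ) : MvPolynomial (Fin n) ℂ :=
  ∏ p ∈ univ.filter (fun p : Fin n × Fin n => p.1 < p.2), (X p.1 - X p.2)

lemma vand_succ (n : ℕ) :
    vand (n + 1) = (∏ j : Fin n, (X 0 - X j.succ)) * rename Fin.succ (vand n) := by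
  unfold vand
  simp only [map_prod, map_sub, rename_X]
  rw [← Finset.prod_filter_mul_prod_filter_not
    (univ.filter (fun p : Fin (n+1) × Fin (n+1) => p.1 < p.2))
    (fun p => p.1 = 0) (fun p => X p.1 - X p.2)]
  congr 1
  · refine (Finset.prod_bij (fun (j : Fin n) _ => ((0 : Fin (n+1)), j.succ)) ?_ ?_ ?_ ?_).symm
    · intro j _
      simp [Fin.succ_pos]
    · intro a _ b _ hab
      simpa [Prod.ext_iff] using hab
    · rintro ⟨p1, p2⟩ hp
      simp only [mem_filter, mem_univ, true_and] at hp
      obtain ⟨hlt, h0⟩ := hp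
      subst h0
      have : p2 ≠ 0 := Fin.pos_iff_ne_zero.mp hlt
      obtain ⟨j, rfl⟩ := Fin.exists_succ_eq.mpr this
      exact ⟨j, by simp, rfl⟩
    · intros; rfl
  · refine (Finset.prod_bij (fun (p : Fin n × Fin n) _ => (p.1.succ, p.2.succ)) ?_ ?_ ?_ ?_).symm
    · intro p hp
      simp only [mem_filter, mem_univ, true_and] at hp ⊢
      exact ⟨Fin.succ_lt_succ_iff.mpr hp, Fin.succ_ne_zero _⟩
    · intro a _ b _ hab
      simp only [Prod.ext_iff, Fin.succ_inj] at hab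
      exact Prod.ext hab.1 hab.2
    · rintro ⟨p1, p2⟩ hp
      simp only [mem_filter, mem_univ, true_and] at hp
      obtain ⟨hlt, h0⟩ := hp
      obtain ⟨i, rfl⟩ := Fin.exists_succ_eq.mpr h0
      have : p2 ≠ 0 := by
        intro h; subst h; exact absurd hlt (by simp)
      obtain ⟨j, rfl⟩ := Fin.exists_succ_eq.mpr this
      exact ⟨(i, j), by simp [Fin.succ_lt_succ_iff.mp hlt], rfl⟩
    · intros; rfl

lemma finSuccEquiv_rename_succ (n : ℕ) (f : MvPolynomial (Fin n) ℂ) :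
    finSuccEquiv ℂ n (rename Fin.succ f) = Polynomial.C f := by
  have : (finSuccEquiv ℂ n).toAlgHom.comp (rename Fin.succ) =
      (Polynomial.CAlgHom : MvPolynomial (Fin n) ℂ →ₐ[ℂ] _) := by
    apply MvPolynomial.algHom_ext
    intro i
    simp [finSuccEquiv_X_succ, Polynomial.CAlgHom]
  exact congrFun (congrArg (fun g => g.toFun) this) f

lemma finSucc_vand (n : ℕ) :
    finSuccEquiv ℂ n (vand (n + 1)) =
      (∏ j : Fin n, (Polynomial.X - Polynomial.C (X j))) * Polynomial.C (vand n) := by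
  rw [vand_succ, map_mul, map_prod, finSuccEquiv_rename_succ]
  congr 1
  refine Finset.prod_congr rfl fun j _ => ?_
  rw [map_sub, finSuccEquiv_X_zero, finSuccEquiv_X_succ]

lemma coeff_top (n k : ℕ) (d : Fin n →₀ ℕ) :
    coeff (Finsupp.cons (k * n) d) ((vand (n + 1)) ^ k) = coeff d ((vand n) ^ k) := by
  rw [← finSuccEquiv_coeff_coeff]
  congr 1
  rw [map_pow, finSucc_vand, mul_pow, ← map_pow, Polynomial.coeff_mul_C]
  have hm : ((∏ j : Fin n, (Polynomial.X - Polynomial.C (X j))) ^ k :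
      Polynomial (MvPolynomial (Fin n) ℂ)).Monic :=
    (Polynomial.monic_prod_of_monic _ _ (fun j _ => Polynomial.monic_X_sub_C (X j))).pow k
  have hdeg : ((∏ j : Fin n, (Polynomial.X - Polynomial.C (X j))) ^ k :
      Polynomial (MvPolynomial (Fin n) ℂ)).natDegree = k * n := by
    rw [Polynomial.natDegree_pow, Polynomial.natDegree_prod]
    · simp [Polynomial.natDegree_X_sub_C, mul_comm]
    · intro j _; exact (Polynomial.monic_X_sub_C _).ne_zero
  rw [← hdeg, hm.coeff_natDegree, one_mul]

/-- Prepending a fixed coordinate, as an affine map. -/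
noncomputable def consAff (n : ℕ) (c : ℝ) : (Fin n → ℝ) →ᵃ[ℝ] (Fin (n + 1) → ℝ) where
  toFun v := Fin.cons c v
  linear :=
  { toFun := fun v => Fin.cons 0 v
    map_add' := by
      intro u v; funext i
      refine Fin.cases ?_ (fun j => ?_) i <;> simp
    map_smul' := by
      intro r v; funext i
      refine Fin.cases ?_ (fun j => ?_) i <;> simp }
  map_vadd' := by
    intro p v; funext i
    refine Fin.cases ?_ (fun j => ?_) i <;> simp

lemma pt_cons (n : ℕ) (m : ℕ) (d : Fin n →₀ ℕ) :
    (fun i => ((Finsupp.cons m d : Fin (n+1) →₀ ℕ) i : ℝ)) =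
      consAff n (m : ℝ) (fun i => (d i : ℝ)) := by
  funext i
  refine Fin.cases ?_ (fun j => ?_) i <;>
    simp [consAff, Finsupp.cons_zero, Finsupp.cons_succ]

/-- If `a_{δn}^k` is not SNP, then `a_{δ_{n+1}}^k` is not SNP. -/
theorem stmt9 (k n : ℕ) (hk : 1 ≤ k) (hn : 1 ≤ n)
    (h : ¬ SNP ((vand n) ^ k)) : ¬ SNP ((vand (n + 1)) ^ k) := by
  rw [SNP] at h
  push_neg at h
  obtain ⟨α, hmem, hzero⟩ := h
  intro hsnp
  have hmem' : (fun i => ((Finsupp.cons (k * n) α : Fin (n+1) →₀ ℕ) i : ℝ)) ∈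
      Newton ((vand (n + 1)) ^ k) := by
    rw [pt_cons]
    have himg : consAff n ((k * n : ℕ) : ℝ) '' Newton ((vand n) ^ k) ⊆
        Newton ((vand (n + 1)) ^ k) := by
      rw [Newton, AffineMap.image_convexHull]
      apply convexHull_mono
      rintro x ⟨y, ⟨d, hd, rfl⟩, rfl⟩
      refine ⟨Finsupp.cons (k * n) d, ?_, pt_cons n (k * n) d⟩
      rw [Finset.mem_coe, mem_support_iff] at hd ⊢
      rwa [coeff_top]
    exact himg ⟨_, hmem, rfl⟩
  exact hsnp _ hmem' (by rw [coeff_top, hzero])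
end

section
/- The monomial symmetric function m_λ in at least |λ| variables has saturated Newton polytope if and only if λ = (1^n) for some n. -/
open MvPolynomial Finset

/-- The monomial symmetric polynomial `m_λ` in `N` variables: the sum of `x^α`
over the distinct rearrangements `α` of `λ`. -/
noncomputable def msymm {N : ℕ} (lam : Fin N → ℕ) : MvPolynomial (Fin N) ℝ :=
  ∑ α ∈ Finset.image
      (fun σ : Equiv.Perm (Fin N) => Finsupp.equivFunOnFinite.symm (lam ∘ σ))
      Finset.univ,
    monomial α 1

/-! If every part of `λ` is `0` or `1`, the permutahedron lies in the slab `{x ≤ 1, ∑ x = |λ|}`,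
whose lattice points are exactly the `0/1` vectors with `|λ|` ones, i.e. the rearrangements of `λ`.

Conversely, if `λ i ≥ 2` and `λ j = 0` (a zero part exists as soon as there are at least `|λ|`
variables), the lattice point `λ + e_j - e_i` lies on the segment from `λ` to its transposition
`λ ∘ (i j)`, at parameter `1 / (λ i - λ j)`. It has one zero part fewer than `λ`, so it is not a
rearrangement of `λ`. -/

theorem Equiv.Perm.exists_eq_comp_of_le_one_of_sum_eq {ι : Type*} [Fintype ι]
    {f g : ι → ℕ} (hf : ∀ i, f i ≤ 1) (hg : ∀ i, g i ≤ 1) (hsum : ∑ i, f i = ∑ i, g i) :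
    ∃ σ : Equiv.Perm ι, f = g ∘ σ := by
  have card_eq_sum {h : ι → ℕ} (hh : ∀ i, h i ≤ 1) : #{i | h i = 1} = ∑ i, h i := by
    rw [card_filter]
    exact sum_congr rfl fun i _ => by have := hh i; split_ifs <;> omega
  obtain ⟨σ, hσ⟩ := Equiv.Perm.exists_map_finset_eq {i | f i = 1} {i | g i = 1}
    (by rw [card_eq_sum hf, card_eq_sum hg, hsum])
  refine ⟨σ, funext fun i => ?_⟩
  have hiff : f i = 1 ↔ g (σ i) = 1 := by
    rw [← mem_filter_univ (p := fun i => g i = 1), ← hσ]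
    simp
  have := hf i
  have := hg (σ i)
  simp only [Function.comp_apply]
  omega

theorem coeff_msymm_ne_zero_iff {N : ℕ} (lam : Fin N → ℕ) (β : Fin N →₀ ℕ) :
    coeff β (msymm lam) ≠ 0 ↔ ∃ σ : Equiv.Perm (Fin N), ⇑β = lam ∘ σ := by
  classical
  rw [_root_.msymm, coeff_sum]
  simp only [coeff_monomial, sum_ite_eq', mem_image, mem_univ, true_and, ne_eq, ite_eq_right_iff,
    one_ne_zero, imp_false, not_not]
  refine exists_congr fun σ => ?_
  rw [Equiv.symm_apply_eq, eq_comm]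
  rfl

theorem newton_msymm {N : ℕ} (lam : Fin N → ℕ) :
    Newton (msymm lam) =
      convexHull ℝ (Set.range fun σ : Equiv.Perm (Fin N) => fun i => (lam (σ i) : ℝ)) := by
  rw [Newton]
  congr 1
  ext x
  simp only [Set.mem_image, mem_coe, mem_support_iff, coeff_msymm_ne_zero_iff, Set.mem_range]
  constructor
  · rintro ⟨β, ⟨σ, hσ⟩, rfl⟩
    exact ⟨σ, by simp [hσ]⟩
  · rintro ⟨σ, rfl⟩
    exact ⟨Finsupp.equivFunOnFinite.symm (lam ∘ σ), ⟨σ, rfl⟩, rfl⟩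

theorem newton_msymm_subset {N M : ℕ} {lam : Fin N → ℕ} (hM : ∀ i, lam i ≤ M) :
    Newton (msymm lam) ⊆ {x | (∀ i, x i ≤ (M : ℝ)) ∧ ∑ i, x i = ∑ i, (lam i : ℝ)} := by
  have hset : {x : Fin N → ℝ | (∀ i, x i ≤ (M : ℝ)) ∧ ∑ i, x i = ∑ i, (lam i : ℝ)} =
      (⋂ i, {x | x i ≤ (M : ℝ)}) ∩ {x | ∑ i, x i = ∑ i, (lam i : ℝ)} := by
    ext; simp
  have hsum : IsLinearMap ℝ fun x : Fin N → ℝ => ∑ i, x i :=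
    ⟨fun x y => sum_add_distrib, fun c x => by simp [mul_sum]⟩
  rw [newton_msymm, hset]
  refine convexHull_min ?_ <|
    (convex_iInter fun i => convex_halfSpace_le (LinearMap.proj i).isLinear _).inter
      (convex_hyperplane hsum _)
  rintro _ ⟨σ, rfl⟩
  refine ⟨Set.mem_iInter.mpr fun i => ?_, ?_⟩
  · show (lam (σ i) : ℝ) ≤ M
    exact_mod_cast hM (σ i)
  · show ∑ i, (lam (σ i) : ℝ) = ∑ i, (lam i : ℝ)
    exact_mod_cast Equiv.sum_comp σ lam

theorem snp_msymm_of_le_one {N : ℕ} {lam : Fin N → ℕ} (h : ∀ i, lam i ≤ 1) :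
    SNP (msymm lam) := by
  intro α hα
  obtain ⟨hle, hsum⟩ := newton_msymm_subset h hα
  beta_reduce at hle hsum
  obtain ⟨σ, hσ⟩ := Equiv.Perm.exists_eq_comp_of_le_one_of_sum_eq (f := α)
    (fun i => by exact_mod_cast hle i) h (by exact_mod_cast hsum)
  exact (coeff_msymm_ne_zero_iff lam α).mpr ⟨σ, hσ⟩

theorem add_single_sub_single_mem_newton_msymm {N : ℕ} {lam : Fin N → ℕ} {i j : Fin N}
    (hij : lam j < lam i) :
    (fun k => (lam k : ℝ)) + Pi.single j 1 - Pi.single i 1 ∈ Newton (msymm lam) := by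
  have hne : i ≠ j := by rintro rfl; exact lt_irrefl _ hij
  set p : Fin N → ℝ := fun k => (lam k : ℝ)
  set q : Fin N → ℝ := fun k => (lam (Equiv.swap i j k) : ℝ)
  set t : ℝ := lam i - lam j
  have ht : 1 ≤ t := by
    simp only [t, le_sub_iff_add_le]
    exact_mod_cast (show 1 + lam j ≤ lam i by omega)
  have hqp : q - p = t • (Pi.single j 1 - Pi.single i 1) := by
    funext k
    by_cases hki : k = i
    · subst hki; simp [q, p, t, hne]
    by_cases hkj : k = j
    · subst hkj; simp [q, p, t, hne.symm]
    · simp [q, p, hki, hkj, Equiv.swap_apply_of_ne_of_ne]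
  rw [newton_msymm]
  refine segment_subset_convexHull (x := p) (y := q)
    (Set.mem_range_self 1) (Set.mem_range_self (Equiv.swap i j)) ?_
  rw [segment_eq_image']
  refine ⟨t⁻¹, ⟨by positivity, inv_le_one_of_one_le₀ ht⟩, ?_⟩
  beta_reduce
  rw [hqp, smul_smul, inv_mul_cancel₀ (by positivity), one_smul]
  abel

theorem card_filter_comp_perm {ι : Type*} [Fintype ι] (p : ι → Prop) [DecidablePred p]
    (σ : Equiv.Perm ι) : #{i | p (σ i)} = #{i | p i} := by
  simp only [card_filter]
  exact Equiv.sum_comp σ fun i => if p i then 1 else 0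

theorem not_snp_msymm_of_two_le_of_eq_zero {N : ℕ} {lam : Fin N → ℕ} {i j : Fin N}
    (hi : 2 ≤ lam i) (hj : lam j = 0) : ¬ SNP (msymm lam) := by
  have hne : i ≠ j := by rintro rfl; omega
  let e (k : Fin N) : Fin N → ℕ := Pi.single k 1
  set α : Fin N →₀ ℕ := Finsupp.equivFunOnFinite.symm fun k => lam k + e j k - e i k
  have hα (k : Fin N) : α k = lam k + e j k - e i k := rfl
  have hαmem : (fun k => (α k : ℝ)) ∈ Newton (msymm lam) := by
    convert add_single_sub_single_mem_newton_msymm (show lam j < lam i by omega) using 1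
    funext k
    by_cases hki : k = i
    · subst hki
      simp [hα, e, hne, Nat.cast_sub (show 1 ≤ lam k by omega)]
    · by_cases hkj : k = j
      · subst hkj; simp [hα, e, hki]
      · simp [hα, e, hki, hkj]
  have hzeros : #{k | α k = 0} = #(({k | lam k = 0} : Finset (Fin N)).erase j) := by
    congr 1
    ext k
    simp only [mem_filter_univ, mem_erase, hα, e, Pi.single_apply]
    by_cases hki : k = i
    · subst hki
      simp only [hne, ↓reduceIte, add_zero, ne_eq, not_false_eq_true, true_and]
      omega
    by_cases hkj : k = j
    · subst hkj; simp [hki]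
    · simp [hki, hkj]
  intro hsnp
  obtain ⟨σ, hσ⟩ := (coeff_msymm_ne_zero_iff lam α).mp (hsnp α hαmem)
  have hcard := card_filter_comp_perm (fun k => lam k = 0) σ
  simp only [← Function.comp_apply (f := lam), ← hσ, hzeros] at hcard
  exact (card_erase_lt_of_mem (by simpa using hj)).ne hcard

theorem stmt13_general {N : ℕ} (lam : Fin N → ℕ)
    (hvars : ∑ i, lam i ≤ N) :
    SNP (msymm lam) ↔ ∀ i, lam i ≤ 1 := by
  refine ⟨fun hsnp => ?_, snp_msymm_of_le_one⟩
  by_contra! ⟨i, hi⟩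
  obtain ⟨j, hj⟩ : ∃ j, lam j = 0 := by
    by_contra! hpos
    have : N < ∑ k, lam k := by
      simpa using sum_lt_sum (fun k _ => Nat.one_le_iff_ne_zero.mpr (hpos k)) ⟨i, mem_univ _, hi⟩
    omega
  exact not_snp_msymm_of_two_le_of_eq_zero hi hj hsnp

/-- `m_λ` in at least `|λ|` variables is SNP iff `λ = (1^k)`, i.e. all parts of
`λ` are at most `1`. -/
theorem stmt13 {N : ℕ} (lam : Fin N → ℕ) (hdec : Antitone lam)
    (hvars : ∑ i, lam i ≤ N) :
    SNP (msymm lam) ↔ ∀ i, lam i ≤ 1 :=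
  stmt13_general lam hvars
end

section
/- Suppose f ∈ Sym is a symmetric function of finite degree d. If f(x1,...,xm) is SNP for some m ≥ d, then f(x1,...,xn) is SNP for every n ≥ 1. -/
open MvPolynomial

/-- Setting the last variable to `0`. -/
noncomputable def setLastZero {n : ℕ} (f : MvPolynomial (Fin (n + 1)) ℝ) :
    MvPolynomial (Fin n) ℝ :=
  aeval (fun i : Fin (n + 1) => Fin.lastCases 0 (fun j : Fin n => X j) i) f

namespace SNPAux

noncomputable def F (n : ℕ) : Fin (n + 1) → MvPolynomial (Fin n) ℝ :=
  fun i => Fin.lastCases 0 (fun j : Fin n => X j) i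

lemma setLastZero_eq {n : ℕ} (g : MvPolynomial (Fin (n + 1)) ℝ) :
    setLastZero g = aeval (F n) g := rfl

@[simp] lemma F_castSucc {n : ℕ} (j : Fin n) : F n (Fin.castSucc j) = X j := by
  simp [F]

@[simp] lemma F_last {n : ℕ} : F n (Fin.last n) = 0 := by
  simp [F]

noncomputable def emb {n : ℕ} (α : Fin n →₀ ℕ) : Fin (n + 1) →₀ ℕ :=
  α.mapDomain Fin.castSucc

lemma emb_castSucc {n : ℕ} (α : Fin n →₀ ℕ) (j : Fin n) :
    emb α (Fin.castSucc j) = α j :=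
  Finsupp.mapDomain_apply (Fin.castSucc_injective n) α j

lemma emb_last {n : ℕ} (α : Fin n →₀ ℕ) : emb α (Fin.last n) = 0 := by
  refine Finsupp.mapDomain_notin_range _ _ ?_
  rintro ⟨j, hj⟩
  exact (Fin.castSucc_lt_last j).ne hj

lemma exists_emb {n : ℕ} (β : Fin (n + 1) →₀ ℕ) (h : β (Fin.last n) = 0) :
    ∃ γ : Fin n →₀ ℕ, emb γ = β := by
  refine ⟨Finsupp.comapDomain Fin.castSucc β ((Fin.castSucc_injective n).injOn), ?_⟩
  ext i
  induction i using Fin.lastCases with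
  | last => rw [emb_last, h]
  | cast j => rw [emb_castSucc, Finsupp.comapDomain_apply]

lemma aeval_monomial_emb {n : ℕ} (γ : Fin n →₀ ℕ) (r : ℝ) :
    aeval (F n) (monomial (emb γ) r) = monomial γ r := by
  rw [aeval_monomial, emb, Finsupp.prod_mapDomain_index_inj (Fin.castSucc_injective n)]
  simp only [F_castSucc]
  rw [monomial_eq, MvPolynomial.algebraMap_eq]

lemma aeval_monomial_last_ne {n : ℕ} (β : Fin (n + 1) →₀ ℕ) (r : ℝ)
    (h : β (Fin.last n) ≠ 0) :
    aeval (F n) (monomial β r) = 0 := by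
  rw [aeval_monomial, Finsupp.prod,
    Finset.prod_eq_zero (Finsupp.mem_support_iff.2 h) (by rw [F_last, zero_pow h]), mul_zero]

lemma coeff_setLastZero {n : ℕ} (g : MvPolynomial (Fin (n + 1)) ℝ) (α : Fin n →₀ ℕ) :
    coeff α (setLastZero g) = coeff (emb α) g := by
  conv_lhs => rw [setLastZero_eq, g.as_sum, map_sum]
  rw [MvPolynomial.coeff_sum]
  rw [Finset.sum_eq_single (emb α)]
  · rw [aeval_monomial_emb, coeff_monomial, if_pos rfl]
  · intro β hβ hne
    by_cases hl : β (Fin.last n) = 0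
    · obtain ⟨γ, rfl⟩ := exists_emb β hl
      rw [aeval_monomial_emb, coeff_monomial, if_neg]
      intro h
      exact hne (by rw [h])
    · rw [aeval_monomial_last_ne _ _ hl, coeff_zero]
  · intro h
    rw [MvPolynomial.notMem_support_iff.mp h, monomial_zero, map_zero, coeff_zero]

def toR {n : ℕ} (α : Fin n →₀ ℕ) : Fin n → ℝ := fun i => (α i : ℝ)

lemma toR_emb {n : ℕ} (α : Fin n →₀ ℕ) : toR (emb α) = Fin.snoc (toR α) 0 := by
  funext i
  induction i using Fin.lastCases with
  | last => simp [toR, emb_last]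
  | cast j => simp [toR, emb_castSucc]

noncomputable def extL (k : ℕ) : (Fin k → ℝ) →ₗ[ℝ] (Fin (k + 1) → ℝ) where
  toFun v := Fin.snoc v 0
  map_add' u v := by
    funext i
    induction i using Fin.lastCases with
    | last => simp
    | cast j => simp
  map_smul' c v := by
    funext i
    induction i using Fin.lastCases with
    | last => simp
    | cast j => simp

lemma mem_Newton_snoc {k : ℕ} {g : MvPolynomial (Fin (k + 1)) ℝ}
    {gk : MvPolynomial (Fin k) ℝ} (hc : setLastZero g = gk)
    {v : Fin k → ℝ} (hv : v ∈ Newton gk) : Fin.snoc v 0 ∈ Newton g := by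
  have hsub : Newton gk ⊆ (extL k) ⁻¹' Newton g := by
    apply convexHull_min
    · rintro _ ⟨β, hβ, rfl⟩
      refine subset_convexHull ℝ _ ⟨emb β, ?_, ?_⟩
      · simp only [Finset.mem_coe, MvPolynomial.mem_support_iff] at hβ ⊢
        rwa [← hc, coeff_setLastZero] at hβ
      · show toR (emb β) = extL k (toR β)
        rw [toR_emb]; rfl
    · exact (convex_convexHull ℝ _).linear_preimage (extL k)
  exact hsub hv

lemma mem_Newton_perm {k : ℕ} {g : MvPolynomial (Fin k) ℝ} (σ : Equiv.Perm (Fin k))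
    (hg : rename (⇑σ) g = g) {α : Fin k →₀ ℕ}
    (hα : toR α ∈ Newton g) : toR (α.mapDomain σ) ∈ Newton g := by
  have hsub : Newton g ⊆ (LinearMap.funLeft ℝ ℝ (⇑σ.symm)) ⁻¹' Newton g := by
    apply convexHull_min
    · rintro _ ⟨β, hβ, rfl⟩
      refine subset_convexHull ℝ _ ⟨β.mapDomain σ, ?_, ?_⟩
      · simp only [Finset.mem_coe, MvPolynomial.mem_support_iff] at hβ ⊢
        rw [← hg, coeff_rename_mapDomain (⇑σ) σ.injective]
        exact hβ
      · funext i
        simp [LinearMap.funLeft, Finsupp.mapDomain_equiv_apply]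
    · exact (convex_convexHull ℝ _).linear_preimage _
  have hmem := hsub hα
  have heq : toR (α.mapDomain σ) = LinearMap.funLeft ℝ ℝ (⇑σ.symm) (toR α) := by
    funext i
    simp [toR, LinearMap.funLeft, Finsupp.mapDomain_equiv_apply]
  rwa [heq]

lemma sum_le_of_mem_Newton {k d : ℕ} {g : MvPolynomial (Fin k) ℝ}
    (hdeg : g.totalDegree ≤ d) {v : Fin k → ℝ} (hv : v ∈ Newton g) :
    ∑ i, v i ≤ (d : ℝ) := by
  have hconv : Convex ℝ {v : Fin k → ℝ | ∑ i, v i ≤ (d : ℝ)} :=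
    convex_halfSpace_le
      ⟨fun a b => by simp [Finset.sum_add_distrib],
       fun c a => by simp [Finset.mul_sum]⟩ _
  have hsub : Newton g ⊆ {v : Fin k → ℝ | ∑ i, v i ≤ (d : ℝ)} := by
    apply convexHull_min _ hconv
    rintro _ ⟨β, hβ, rfl⟩
    simp only [Set.mem_setOf_eq]
    have h1 : (β.sum fun _ e => e) ≤ d :=
      le_trans (MvPolynomial.le_totalDegree (by simpa using hβ)) hdeg
    rw [Finsupp.sum_fintype _ _ (fun _ => rfl)] at h1
    calc ∑ i, ((β i : ℝ)) = ((∑ i, β i : ℕ) : ℝ) := by push_cast; rfl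
    _ ≤ (d : ℝ) := Nat.cast_le.2 h1
  exact hsub hv

lemma linearMap_centerMass {ι E F : Type*} [AddCommGroup E] [Module ℝ E]
    [AddCommGroup F] [Module ℝ F]
    (L : E →ₗ[ℝ] F) (t : Finset ι) (w : ι → ℝ) (z : ι → E) :
    L (t.centerMass w z) = t.centerMass w (L ∘ z) := by
  simp [Finset.centerMass, map_smul, map_sum, Function.comp]

lemma mem_Newton_restrict {k : ℕ} {g : MvPolynomial (Fin (k + 1)) ℝ}
    {gk : MvPolynomial (Fin k) ℝ} (hc : setLastZero g = gk)
    {v : Fin (k + 1) → ℝ} (hv : v ∈ Newton g) (h0 : v (Fin.last k) = 0) :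
    (LinearMap.funLeft ℝ ℝ Fin.castSucc v) ∈ Newton gk := by
  classical
  rw [Newton, convexHull_eq] at hv
  obtain ⟨ι, t, w, z, hw0, hw1, hz, hx⟩ := hv
  have hznn : ∀ i ∈ t, 0 ≤ z i (Fin.last k) := by
    intro i hi
    obtain ⟨β, _, hβ⟩ := hz i hi
    rw [← hβ]
    exact Nat.cast_nonneg _
  have hsum0 : ∑ i ∈ t, w i * z i (Fin.last k) = 0 := by
    have h1 : ∑ i ∈ t, w i • z i = v := by
      rw [← Finset.centerMass_eq_of_sum_1 _ _ hw1, hx]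
    have := congrFun h1 (Fin.last k)
    rw [Finset.sum_apply] at this
    simpa [h0] using this
  have hlast : ∀ i ∈ t, w i ≠ 0 → z i (Fin.last k) = 0 := by
    intro i hi hwi
    have := (Finset.sum_eq_zero_iff_of_nonneg
      (fun j hj => mul_nonneg (hw0 j hj) (hznn j hj))).1 hsum0 i hi
    rcases mul_eq_zero.1 this with h | h
    · exact absurd h hwi
    · exact h
  set t' := t.filter (fun i => w i ≠ 0) with ht'
  have hmass : t'.centerMass w z = v := by
    rw [ht', Finset.centerMass_filter_ne_zero, hx]
  have hres : LinearMap.funLeft ℝ ℝ Fin.castSucc v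
      = t'.centerMass w ((LinearMap.funLeft ℝ ℝ Fin.castSucc) ∘ z) := by
    rw [← hmass, linearMap_centerMass]
  rw [Newton, hres]
  apply Finset.centerMass_mem_convexHull
  · intro i hi; exact hw0 i (Finset.mem_filter.1 hi).1
  · have : ∑ i ∈ t', w i = 1 := by
      rw [ht', Finset.sum_filter_ne_zero, hw1]
    rw [this]; exact one_pos
  · intro i hi
    obtain ⟨hit, hwi⟩ := Finset.mem_filter.1 hi
    obtain ⟨β, hβ, hzi⟩ := hz i hit
    have hβl : β (Fin.last k) = 0 := by
      have h2 := hlast i hit hwi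
      rw [← hzi] at h2
      have h3 : ((β (Fin.last k) : ℕ) : ℝ) = 0 := h2
      exact_mod_cast h3
    obtain ⟨γ, rfl⟩ := exists_emb β hβl
    refine ⟨γ, ?_, ?_⟩
    · simp only [Finset.mem_coe, MvPolynomial.mem_support_iff] at hβ ⊢
      rwa [← hc, coeff_setLastZero]
    · funext j
      simp [LinearMap.funLeft, ← hzi, emb_castSucc, Function.comp]

end SNPAux

open SNPAux in
/-- Stability of SNP: a symmetric function `f` of degree `d`, modeled as a
compatible family of symmetric polynomials `f n` in `n` variables, is SNP in all
numbers of variables as soon as it is SNP in some `m ≥ d` variables. -/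
theorem stmt14 (d : ℕ) (f : (n : ℕ) → MvPolynomial (Fin n) ℝ)
    (hsym : ∀ n, (f n).IsSymmetric)
    (hdeg : ∀ n, (f n).totalDegree ≤ d)
    (hcompat : ∀ n, setLastZero (f (n + 1)) = f n)
    (m : ℕ) (hm : d ≤ m) (hSNP : SNP (f m)) :
    ∀ n, 1 ≤ n → SNP (f n) := by
  classical
  have down : ∀ k, SNP (f (k + 1)) → SNP (f k) := by
    intro k hS α hα
    have h1 : Fin.snoc (toR α) 0 ∈ Newton (f (k + 1)) :=
      mem_Newton_snoc (hcompat k) hα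
    have h2 : (fun i => ((emb α) i : ℝ)) ∈ Newton (f (k + 1)) := by
      show toR (emb α) ∈ Newton (f (k + 1))
      rw [toR_emb]; exact h1
    have h3 := hS _ h2
    rwa [← coeff_setLastZero, hcompat k] at h3
  have up : ∀ k, d ≤ k → SNP (f k) → SNP (f (k + 1)) := by
    intro k hdk hS α hα
    have hsum : ∑ i, ((α i : ℝ)) ≤ (d : ℝ) :=
      sum_le_of_mem_Newton (hdeg (k + 1)) hα
    have hsumn : ∑ i, α i ≤ d := by exact_mod_cast hsum
    have hexists : ∃ i, α i = 0 := by
      by_contra hno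
      push_neg at hno
      have huniv : α.support = Finset.univ :=
        Finset.eq_univ_iff_forall.2 fun i => Finsupp.mem_support_iff.2 (hno i)
      have hc1 : α.support.card ≤ ∑ i ∈ α.support, α i := by
        rw [Finset.card_eq_sum_ones]
        exact Finset.sum_le_sum fun i hi =>
          Nat.one_le_iff_ne_zero.2 (Finsupp.mem_support_iff.1 hi)
      have hc2 : k + 1 ≤ d := by
        calc k + 1 = α.support.card := by
              rw [huniv, Finset.card_univ, Fintype.card_fin]
        _ ≤ ∑ i ∈ α.support, α i := hc1
        _ ≤ ∑ i, α i := Finset.sum_le_sum_of_subset (Finset.subset_univ _)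
        _ ≤ d := hsumn
      omega
    obtain ⟨i0, hi0⟩ := hexists
    set σ : Equiv.Perm (Fin (k + 1)) := Equiv.swap i0 (Fin.last k) with hσ
    set α' := α.mapDomain σ with hα'
    have hren : rename (⇑σ) (f (k + 1)) = f (k + 1) := hsym (k + 1) σ
    have hmem' : toR α' ∈ Newton (f (k + 1)) := mem_Newton_perm σ hren hα
    have hlast0 : α' (Fin.last k) = 0 := by
      rw [hα', Finsupp.mapDomain_equiv_apply]
      simp only [hσ, Equiv.symm_swap, Equiv.swap_apply_right]
      exact hi0
    have hres : LinearMap.funLeft ℝ ℝ Fin.castSucc (toR α') ∈ Newton (f k) :=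
      mem_Newton_restrict (hcompat k) hmem' (by simp [toR, hlast0])
    obtain ⟨γ, hγ⟩ := exists_emb α' hlast0
    have hγmem : (fun j => ((γ j : ℝ))) ∈ Newton (f k) := by
      have heq : LinearMap.funLeft ℝ ℝ Fin.castSucc (toR α')
          = fun j => ((γ j : ℝ)) := by
        funext j
        simp [LinearMap.funLeft, toR, ← hγ, emb_castSucc]
      rwa [heq] at hres
    have hcγ := hS γ hγmem
    have hcα' : coeff α' (f (k + 1)) ≠ 0 := by
      intro hz
      apply hcγ
      rw [← hcompat k, coeff_setLastZero, hγ, hz]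
    have htrans : coeff α' (f (k + 1)) = coeff α (f (k + 1)) := by
      conv_lhs => rw [← hren]
      rw [hα', coeff_rename_mapDomain (⇑σ) σ.injective]
    rwa [htrans] at hcα'
  have hdown : ∀ j, SNP (f (m - j)) := by
    intro j
    induction j with
    | zero => simpa using hSNP
    | succ j ih =>
      by_cases h : j < m
      · have heq : m - j = (m - (j + 1)) + 1 := by omega
        rw [heq] at ih
        exact down _ ih
      · have heq : m - (j + 1) = m - j := by omega
        rw [heq]; exact ih
  have hup : ∀ n, m ≤ n → SNP (f n) := by
    intro n hn
    induction n, hn using Nat.le_induction with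
    | base => exact hSNP
    | succ k hk ih => exact up k (le_trans hm hk) ih
  intro n hn
  rcases le_total n m with h | h
  · have := hdown (m - n)
    rwa [Nat.sub_sub_self h] at this
  · exact hup n h
end

section
/- Let u, v ∈ S_n be permutations of the same Coxeter length ℓ. If θ_{D_u}(S) = θ_{D_v}(S) for every suffix set S = {i, i+1, ..., n} (1 ≤ i ≤ n), then u = v. -/
/-!
For a suffix set `S = {i, …, n}` no column word contains a matched pair: its `)`s come from
rows above `i` and so precede every `(`. Hence `θ_{D_w}(S)` counts the cells of `D_w` in rows
`≥ i`, which is the suffix sum `∑_{r ≥ i} c_r(w)` of the Lehmer code. Suffix sums determine the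
code, and the code determines `w`: `c_r(w)` is the number of values below `w r` that `w` does not
take on rows `< r`, so `w r` is recovered row by row.
-/

open Finset
open scoped Classical

/-- The Rothe diagram of a permutation `w`:
`{(i,j) : w(i) > j and w⁻¹(j) > i}`. -/
noncomputable def RotheDiagram {n : ℕ} (w : Equiv.Perm (Fin n)) : Finset (Fin n × Fin n) :=
  Finset.univ.filter (fun p => p.2 < w p.1 ∧ p.1 < w.symm p.2)

/-- One step of reading the column word: state is (number of currently unmatched
'(' 's, number of matched pairs plus stars so far). -/
noncomputable def thetaStep {n : ℕ} (D : Finset (Fin n × Fin n)) (S : Finset (Fin n))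
    (c : Fin n) (st : ℕ × ℕ) (r : Fin n) : ℕ × ℕ :=
  if (r, c) ∈ D then
    if r ∈ S then (st.1, st.2 + 1)          -- '★'
    else if 0 < st.1 then (st.1 - 1, st.2 + 1)  -- matched ')'
    else st                                  -- unmatched ')'
  else if r ∈ S then (st.1 + 1, st.2) else st  -- '('

/-- `θ_D^c(S)`: the number of matched parenthesis pairs plus stars in the
column word of column `c`. -/
noncomputable def thetaCol {n : ℕ} (D : Finset (Fin n × Fin n)) (S : Finset (Fin n))
    (c : Fin n) : ℕ :=
  ((List.finRange n).foldl (thetaStep D S c) (0, 0)).2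

/-- `θ_D(S) = Σ_c θ_D^c(S)`. -/
noncomputable def theta {n : ℕ} (D : Finset (Fin n × Fin n)) (S : Finset (Fin n)) : ℕ :=
  ∑ c : Fin n, thetaCol D S c

/-- The Coxeter length of `w`: the number of inversions. -/
noncomputable def permLength {n : ℕ} (w : Equiv.Perm (Fin n)) : ℕ :=
  (Finset.univ.filter (fun p : Fin n × Fin n => p.1 < p.2 ∧ w p.2 < w p.1)).card

section ThetaOfSuffix

variable {n : ℕ} (D : Finset (Fin n × Fin n)) (c : Fin n)

lemma foldl_thetaStep_of_forall_not_mem {S : Finset (Fin n)} {L : List (Fin n)}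
    (hL : ∀ r ∈ L, r ∉ S) {st : ℕ × ℕ} (hst : st.1 = 0) :
    L.foldl (thetaStep D S c) st = st := by
  induction L with
  | nil => rfl
  | cons r L ih =>
    have hr := hL r List.mem_cons_self
    rw [List.foldl_cons, show thetaStep D S c st r = st by simp [thetaStep, hr, hst]]
    exact ih fun x hx => hL x (List.mem_cons_of_mem _ hx)

lemma snd_foldl_thetaStep_of_forall_mem {S : Finset (Fin n)} {L : List (Fin n)}
    (hL : ∀ r ∈ L, r ∈ S) (st : ℕ × ℕ) :
    (L.foldl (thetaStep D S c) st).2 = st.2 + L.countP (fun r => (r, c) ∈ D) := by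
  induction L generalizing st with
  | nil => simp
  | cons r L ih =>
    have hr := hL r List.mem_cons_self
    rw [List.foldl_cons, ih fun x hx => hL x (List.mem_cons_of_mem _ hx)]
    by_cases hD : (r, c) ∈ D
    · simp [thetaStep, hD, hr]
      omega
    · simp [thetaStep, hD, hr]

lemma card_filter_eq_countP_finRange (p : Fin n → Prop) [DecidablePred p] :
    #{r | p r} = (List.finRange n).countP p := by
  rw [← Multiset.coe_countP, Multiset.countP_eq_card_filter]
  rfl

lemma thetaCol_Ici (i : Fin n) :
    thetaCol D (Ici i) c = #{r ∈ Ici i | (r, c) ∈ D} := by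
  set front := (List.finRange n).take i.val
  set back := (List.finRange n).drop i.val
  have hsplit : front ++ back = List.finRange n := List.take_append_drop _ _
  have hfront : ∀ r ∈ front, r < i := by
    intro r hr
    obtain ⟨k, hk, rfl⟩ := List.mem_take_iff_getElem.mp hr
    simp only [List.length_finRange] at hk
    simp [Fin.lt_def]
    omega
  have hback : ∀ r ∈ back, i ≤ r := by
    intro r hr
    obtain ⟨k, hk, rfl⟩ := List.mem_drop_iff_getElem.mp hr
    simp [Fin.le_def]
  have hcount : #{r ∈ Ici i | (r, c) ∈ D} = back.countP (fun r => (r, c) ∈ D) := by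
    rw [← filter_le_eq_Ici, filter_filter, card_filter_eq_countP_finRange, ← hsplit,
      List.countP_append, List.countP_eq_zero.mpr fun r hr => by simp [(hfront r hr).not_ge],
      zero_add]
    exact List.countP_congr fun r hr => by simp [hback r hr]
  rw [thetaCol, ← hsplit, List.foldl_append,
    foldl_thetaStep_of_forall_not_mem (L := front) D c
      (fun r hr => by simpa using hfront r hr) rfl,
    snd_foldl_thetaStep_of_forall_mem D c (fun r hr => by simpa using hback r hr), hcount]
  simp

lemma theta_Ici (i : Fin n) : theta D (Ici i) = ∑ r ∈ Ici i, #{c | (r, c) ∈ D} := by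
  simp only [theta, thetaCol_Ici, card_filter]
  exact Finset.sum_comm

end ThetaOfSuffix

lemma card_Iio_sdiff_lt_card_Iio_sdiff {α : Type*} [LinearOrder α] [LocallyFiniteOrderBot α]
    {A : Finset α} {a b : α} (ha : a ∉ A) (hab : a < b) :
    #(Iio a \ A) < #(Iio b \ A) := by
  refine Finset.card_lt_card (Finset.ssubset_iff_of_subset ?_ |>.mpr ⟨a, ?_, ?_⟩)
  · exact sdiff_subset_sdiff (Iio_subset_Iio hab.le) le_rfl
  · simp [hab, ha]
  · simp

lemma eq_of_card_Iio_sdiff_eq {α : Type*} [LinearOrder α] [LocallyFiniteOrderBot α]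
    {A : Finset α} {a b : α} (ha : a ∉ A) (hb : b ∉ A)
    (h : #(Iio a \ A) = #(Iio b \ A)) : a = b := by
  rcases lt_trichotomy a b with hab | hab | hab
  · exact absurd h (card_Iio_sdiff_lt_card_Iio_sdiff ha hab).ne
  · exact hab
  · exact absurd h (card_Iio_sdiff_lt_card_Iio_sdiff hb hab).ne'

section LehmerCode

variable {n : ℕ}

def lehmerCode (w : Equiv.Perm (Fin n)) (r : Fin n) : ℕ := #{j | r < j ∧ w j < w r}

lemma card_row_rotheDiagram (w : Equiv.Perm (Fin n)) (r : Fin n) :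
    #{c | (r, c) ∈ RotheDiagram w} = lehmerCode w r := by
  refine (Finset.card_equiv w.symm fun c => ?_).trans rfl
  simp [RotheDiagram, and_comm]

lemma lehmerCode_eq_card_Iio_sdiff (w : Equiv.Perm (Fin n)) (r : Fin n) :
    lehmerCode w r = #(Iio (w r) \ (Iio r).image w) := by
  refine Finset.card_equiv w fun j => ?_
  simp only [mem_filter, mem_univ, true_and, mem_sdiff, mem_Iio, mem_image,
    EmbeddingLike.apply_eq_iff_eq, exists_eq_right, not_lt]
  constructor
  · rintro ⟨hrj, hw⟩
    exact ⟨hw, hrj.le⟩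
  · rintro ⟨hw, hrj⟩
    exact ⟨lt_of_le_of_ne hrj (by rintro rfl; exact hw.false), hw⟩

lemma lehmerCode_injective : Function.Injective (lehmerCode (n := n)) := by
  intro u v huv
  ext1 r
  induction r using WellFoundedLT.induction with
  | ind r ih =>
  have himage : (Iio r).image u = (Iio r).image v :=
    image_congr fun j hj => ih j (mem_Iio.mp hj)
  have hcode := congrFun huv r
  rw [lehmerCode_eq_card_Iio_sdiff, lehmerCode_eq_card_Iio_sdiff, himage] at hcode
  refine eq_of_card_Iio_sdiff_eq ?_ ?_ hcode
  · rw [← himage]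
    simp
  · simp

end LehmerCode

lemma eq_of_sum_Ici_eq {α M : Type*} [LinearOrder α] [LocallyFiniteOrderTop α] [WellFoundedGT α]
    [AddCancelCommMonoid M] {f g : α → M} (h : ∀ i, ∑ j ∈ Ici i, f j = ∑ j ∈ Ici i, g j) :
    f = g := by
  ext i
  induction i using WellFoundedGT.induction with
  | ind i ih =>
  have hsum := h i
  rw [← Ioi_insert, sum_insert notMem_Ioi_self, sum_insert notMem_Ioi_self,
    sum_congr rfl fun j hj => ih j (mem_Ioi.mp hj)] at hsum
  exact add_right_cancel hsum

theorem stmt18_general {n : ℕ} (u v : Equiv.Perm (Fin n))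
    (hθ : ∀ i : Fin n,
      theta (RotheDiagram u) (Finset.univ.filter (fun j => i ≤ j)) =
      theta (RotheDiagram v) (Finset.univ.filter (fun j => i ≤ j))) :
    u = v := by
  refine lehmerCode_injective (eq_of_sum_Ici_eq fun i => ?_)
  simpa only [filter_le_eq_Ici, theta_Ici, card_row_rotheDiagram] using hθ i

/-- If `u, v ∈ S_n` have the same length and `θ_{D_u}(S) = θ_{D_v}(S)` for all
suffix sets `S = {i, i+1, ..., n}`, then `u = v`. -/
theorem stmt18 {n : ℕ} (u v : Equiv.Perm (Fin n))
    (hlen : permLength u = permLength v)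
    (hθ : ∀ i : Fin n,
      theta (RotheDiagram u) (Finset.univ.filter (fun j => i ≤ j)) =
      theta (RotheDiagram v) (Finset.univ.filter (fun j => i ≤ j))) :
    u = v :=
  stmt18_general u v hθ
end

section
/- If w ∈ S_n satisfies w(i) < w(i+1), then the Schubitope S_{D_w} is symmetric under swapping coordinates i and i+1: (α1,...,αi,α_{i+1},...,αn) ∈ S_{D_w} iff (α1,...,α_{i+1},αi,...,αn) ∈ S_{D_w}. -/
open Finset
open scoped Classical

/-- The Schubitope of a diagram `D ⊆ [n]×[n]`. -/
noncomputable def Schubitope {n : ℕ} (D : Finset (Fin n × Fin n)) : Set (Fin n → ℝ) :=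
  {α | (∀ i, 0 ≤ α i) ∧ (∑ i, α i = D.card) ∧
    ∀ S : Finset (Fin n), ∑ i ∈ S, α i ≤ theta D S}

lemma thetaStep_congr {n : ℕ} (D : Finset (Fin n × Fin n)) (S S' : Finset (Fin n)) (c : Fin n)
    (r : Fin n) (h : r ∈ S ↔ r ∈ S') (st : ℕ × ℕ) :
    thetaStep D S c st r = thetaStep D S' c st r := by
  unfold thetaStep
  by_cases h1 : (r, c) ∈ D <;> by_cases h2 : r ∈ S <;> simp_all

lemma two_step {n : ℕ} (D : Finset (Fin n × Fin n)) (S S' : Finset (Fin n)) (c i j : Fin n)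
    (hi : i ∈ S) (hj : j ∉ S) (hi' : i ∉ S') (hj' : j ∈ S')
    (hD : (i, c) ∈ D → (j, c) ∈ D) (st : ℕ × ℕ) :
    thetaStep D S c (thetaStep D S c st i) j = thetaStep D S' c (thetaStep D S' c st i) j := by
  unfold thetaStep
  rcases st with ⟨p, q⟩
  by_cases h1 : (i, c) ∈ D
  · have h2 := hD h1
    cases p <;> simp [h1, h2, hi, hj, hi', hj']
  · by_cases h2 : (j, c) ∈ D <;>
      cases p <;> simp [h1, h2, hi, hj, hi', hj']

lemma mem_take_lt {n m : ℕ} (r : Fin n) (hr : r ∈ (List.finRange n).take m) : (r : ℕ) < m := by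
  obtain ⟨k, hk, he⟩ := List.mem_iff_getElem.1 hr
  simp only [List.getElem_take, List.getElem_finRange, Fin.cast_mk] at he
  subst he
  simp only [List.length_take, List.length_finRange, lt_min_iff] at hk
  exact hk.1

lemma mem_drop_ge {n m : ℕ} (r : Fin n) (hr : r ∈ (List.finRange n).drop m) : m ≤ (r : ℕ) := by
  obtain ⟨k, hk, he⟩ := List.mem_iff_getElem.1 hr
  simp only [List.getElem_drop, List.getElem_finRange, Fin.cast_mk] at he
  subst he
  simp

lemma thetaCol_swap {n : ℕ} (D : Finset (Fin n × Fin n)) (S S' : Finset (Fin n)) (c i j : Fin n)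
    (hij : (i : ℕ) + 1 = (j : ℕ))
    (hi : i ∈ S) (hj : j ∉ S) (hi' : i ∉ S') (hj' : j ∈ S')
    (hSS' : ∀ r : Fin n, r ≠ i → r ≠ j → (r ∈ S ↔ r ∈ S'))
    (hD : (i, c) ∈ D → (j, c) ∈ D) :
    thetaCol D S c = thetaCol D S' c := by
  have hjn : (j : ℕ) < n := j.isLt
  have hin : (i : ℕ) < n := i.isLt
  have hdrop1 : (List.finRange n).drop (i : ℕ) = i :: (List.finRange n).drop ((i : ℕ) + 1) := by
    rw [List.drop_eq_getElem_cons (by simp [hin])]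
    simp [List.getElem_finRange]
  have hdrop2 : (List.finRange n).drop ((i : ℕ) + 1) =
      j :: (List.finRange n).drop ((j : ℕ) + 1) := by
    rw [hij, List.drop_eq_getElem_cons (by simp [hjn])]
    simp [List.getElem_finRange]
  have hsplit : List.finRange n =
      (List.finRange n).take (i : ℕ) ++ i :: j :: (List.finRange n).drop ((j : ℕ) + 1) := by
    rw [← hdrop2, ← hdrop1, List.take_append_drop]
  unfold thetaCol
  conv_lhs => rw [hsplit]
  conv_rhs => rw [hsplit]
  rw [List.foldl_append, List.foldl_append]
  have htake : ((List.finRange n).take (i : ℕ)).foldl (thetaStep D S c) (0, 0) =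
      ((List.finRange n).take (i : ℕ)).foldl (thetaStep D S' c) (0, 0) := by
    apply List.foldl_ext
    intro st r hr
    have hlt := mem_take_lt r hr
    exact thetaStep_congr D S S' c r
      (hSS' r (fun h => by subst h; exact lt_irrefl _ hlt)
        (fun h => by subst h; omega)) st
  rw [htake]
  rw [List.foldl_cons, List.foldl_cons, List.foldl_cons, List.foldl_cons,
    two_step D S S' c i j hi hj hi' hj' hD]
  refine congrArg Prod.snd ?_
  apply List.foldl_ext
  intro st r hr
  have hge := mem_drop_ge r hr
  exact thetaStep_congr D S S' c r
    (hSS' r (fun h => by subst h; omega) (fun h => by subst h; omega)) st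

lemma rothe_step {n : ℕ} (w : Equiv.Perm (Fin n)) (i j c : Fin n)
    (hij : (i : ℕ) + 1 = (j : ℕ)) (hw : w i < w j)
    (h : (i, c) ∈ RotheDiagram w) : (j, c) ∈ RotheDiagram w := by
  simp only [RotheDiagram, Finset.mem_filter, Finset.mem_univ, true_and] at h ⊢
  obtain ⟨h1, h2⟩ := h
  refine ⟨lt_trans h1 hw, ?_⟩
  have hne : w.symm c ≠ j := by
    intro he
    have hc : w j = c := by conv_lhs => rw [← he, Equiv.apply_symm_apply]
    rw [hc] at hw
    exact absurd (lt_trans h1 hw) (lt_irrefl c)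
  have h2' : (i : ℕ) < (w.symm c : ℕ) := h2
  have hne' : ((w.symm c : Fin n) : ℕ) ≠ (j : ℕ) := fun he => hne (Fin.ext he)
  exact Fin.lt_def.2 (by omega)

lemma theta_swap {n : ℕ} (w : Equiv.Perm (Fin n)) (i j : Fin n)
    (hij : (i : ℕ) + 1 = (j : ℕ)) (hw : w i < w j) (S : Finset (Fin n)) :
    theta (RotheDiagram w) (S.image (Equiv.swap i j)) = theta (RotheDiagram w) S := by
  have hne : i ≠ j := fun h => by subst h; omega
  have hmem : ∀ r : Fin n, r ∈ S.image (Equiv.swap i j) ↔ Equiv.swap i j r ∈ S := by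
    intro r
    constructor
    · intro h
      obtain ⟨s, hs, rfl⟩ := Finset.mem_image.1 h
      simpa [Equiv.swap_apply_self] using hs
    · intro h
      exact Finset.mem_image.2 ⟨_, h, by simp [Equiv.swap_apply_self]⟩
  have hiT : i ∈ S.image (Equiv.swap i j) ↔ j ∈ S := by rw [hmem]; simp
  have hjT : j ∈ S.image (Equiv.swap i j) ↔ i ∈ S := by rw [hmem]; simp
  have hoT : ∀ r : Fin n, r ≠ i → r ≠ j → (r ∈ S.image (Equiv.swap i j) ↔ r ∈ S) := by
    intro r h1 h2
    rw [hmem, Equiv.swap_apply_of_ne_of_ne h1 h2]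
  by_cases hiS : i ∈ S <;> by_cases hjS : j ∈ S
  · have : S.image (Equiv.swap i j) = S := by
      ext r
      by_cases h1 : r = i
      · subst h1; simp [hiT, hiS, hjS]
      by_cases h2 : r = j
      · subst h2; simp [hjT, hiS, hjS]
      · exact hoT r h1 h2
    rw [this]
  · -- i ∈ S, j ∉ S : use thetaCol_swap with S, S' := image
    unfold theta
    refine Finset.sum_congr rfl (fun c _ => ?_)
    exact (thetaCol_swap (RotheDiagram w) S (S.image (Equiv.swap i j)) c i j hij
      hiS hjS (fun h => hjS (hiT.1 h)) (hjT.2 hiS)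
      (fun r h1 h2 => (hoT r h1 h2).symm) (rothe_step w i j c hij hw)).symm
  · -- i ∉ S, j ∈ S
    unfold theta
    refine Finset.sum_congr rfl (fun c _ => ?_)
    exact thetaCol_swap (RotheDiagram w) (S.image (Equiv.swap i j)) S c i j hij
      (hiT.2 hjS) (fun h => hiS (hjT.1 h)) hiS hjS
      (hoT) (rothe_step w i j c hij hw)
  · have : S.image (Equiv.swap i j) = S := by
      ext r
      by_cases h1 : r = i
      · subst h1; simp [hiT, hiS, hjS]
      by_cases h2 : r = j
      · subst h2; simp [hjT, hiS, hjS]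
      · exact hoT r h1 h2
    rw [this]

lemma mem_of_mem {n : ℕ} (w : Equiv.Perm (Fin n)) (i j : Fin n)
    (hij : (i : ℕ) + 1 = (j : ℕ)) (hw : w i < w j) (α : Fin n → ℝ)
    (h : α ∈ Schubitope (RotheDiagram w)) :
    α ∘ (Equiv.swap i j) ∈ Schubitope (RotheDiagram w) := by
  obtain ⟨h0, h1, h2⟩ := h
  refine ⟨fun k => h0 _, ?_, ?_⟩
  · rw [← h1]
    exact Equiv.sum_comp (Equiv.swap i j) α
  · intro S
    have hsum : ∑ k ∈ S, (α ∘ Equiv.swap i j) k = ∑ k ∈ S.image (Equiv.swap i j), α k :=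
      (Finset.sum_image (fun a _ b _ hab => (Equiv.swap i j).injective hab)).symm
    rw [hsum, ← theta_swap w i j hij hw S]
    exact h2 _

/-- If `w(i) < w(i+1)` then the Schubitope `S_{D_w}` is symmetric under swapping
coordinates `i` and `i+1`. -/
theorem stmt19 {n : ℕ} (w : Equiv.Perm (Fin n)) (i j : Fin n)
    (hij : (i : ℕ) + 1 = (j : ℕ)) (hw : w i < w j) (α : Fin n → ℝ) :
    α ∈ Schubitope (RotheDiagram w) ↔
      α ∘ (Equiv.swap i j) ∈ Schubitope (RotheDiagram w) := by
  constructor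
  · exact mem_of_mem w i j hij hw α
  · intro h
    have h2 := mem_of_mem w i j hij hw _ h
    have heq : (α ∘ ⇑(Equiv.swap i j)) ∘ ⇑(Equiv.swap i j) = α := by
      funext k; simp [Function.comp, Equiv.swap_apply_self]
    rwa [heq] at h2
end
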